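/- arXiv:1408.3759 — 8 statements merged into one kernel-verified Lean document; each statement's English description precedes it below -/
import Mathlib

section
/- Let A be a unital associative k-algebra and α, β ∈ k with α ≠ 0 and β ≠ 0. Then the linear map R(a⊗b) = α·ab⊗1 + β·1⊗ab − α·a⊗b satisfies the braid equation R¹² ∘ R²³ ∘ R¹² = R²³ ∘ R¹² ∘ R²³. -/
open TensorProduct

noncomputable section

def tw (k V : Type*) [Field k] [AddCommGroup V] [Module k V] :
    V ⊗[k] V →ₗ[k] V ⊗[k] V := (TensorProduct.comm k V V).toLinearMap

def R12 {k V : Type*} [Field k] [AddCommGroup V] [Module k V]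
    (R : V ⊗[k] V →ₗ[k] V ⊗[k] V) :
    V ⊗[k] (V ⊗[k] V) →ₗ[k] V ⊗[k] (V ⊗[k] V) :=
  (TensorProduct.assoc k V V V).toLinearMap ∘ₗ TensorProduct.map R LinearMap.id ∘ₗ
    (TensorProduct.assoc k V V V).symm.toLinearMap

def R23 {k V : Type*} [Field k] [AddCommGroup V] [Module k V]
    (R : V ⊗[k] V →ₗ[k] V ⊗[k] V) :
    V ⊗[k] (V ⊗[k] V) →ₗ[k] V ⊗[k] (V ⊗[k] V) :=
  TensorProduct.map LinearMap.id R

def R13 {k V : Type*} [Field k] [AddCommGroup V] [Module k V]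
    (R : V ⊗[k] V →ₗ[k] V ⊗[k] V) :
    V ⊗[k] (V ⊗[k] V) →ₗ[k] V ⊗[k] (V ⊗[k] V) :=
  TensorProduct.map LinearMap.id (tw k V) ∘ₗ R12 R ∘ₗ TensorProduct.map LinearMap.id (tw k V)

/-!
Both sides are linear, so it suffices to compare them on pure tensors `a ⊗ b ⊗ c`. There every
term is a multiple of a pure tensor whose factors are `1` or products of consecutive factors among
`a`, `b`, `c`; associativity of `A` identifies such tensors on the two sides, and their
coefficients, polynomials in `α` and `β`, then agree.
-/

section LegOperators

variable {k V : Type*} [Field k] [AddCommGroup V] [Module k V] (R : V ⊗[k] V →ₗ[k] V ⊗[k] V)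

theorem R12_tmul (a b c : V) :
    R12 R (a ⊗ₜ (b ⊗ₜ c)) = TensorProduct.assoc k V V V (R (a ⊗ₜ b) ⊗ₜ c) := by
  simp [R12]

theorem R23_tmul (a b c : V) : R23 R (a ⊗ₜ (b ⊗ₜ c)) = a ⊗ₜ R (b ⊗ₜ c) := by
  simp [R23]

end LegOperators

section MultiplicationBraiding

variable {k A : Type*} [Field k] [Ring A] [Algebra k A] {α β : k} {R : A ⊗[k] A →ₗ[k] A ⊗[k] A}

theorem R12_tmul_of_apply_tmul
    (hR : ∀ a b : A, R (a ⊗ₜ b) = α • (a * b) ⊗ₜ (1 : A) + β • (1 : A) ⊗ₜ (a * b) - α • a ⊗ₜ b)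
    (a b c : A) :
    R12 R (a ⊗ₜ (b ⊗ₜ c)) =
      α • (a * b) ⊗ₜ ((1 : A) ⊗ₜ c) + β • (1 : A) ⊗ₜ ((a * b) ⊗ₜ c) - α • a ⊗ₜ (b ⊗ₜ c) := by
  simp only [R12_tmul, hR, sub_tmul, add_tmul, smul_tmul', map_sub, map_add, assoc_tmul]

theorem R23_tmul_of_apply_tmul
    (hR : ∀ a b : A, R (a ⊗ₜ b) = α • (a * b) ⊗ₜ (1 : A) + β • (1 : A) ⊗ₜ (a * b) - α • a ⊗ₜ b)
    (a b c : A) :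
    R23 R (a ⊗ₜ (b ⊗ₜ c)) =
      α • a ⊗ₜ ((b * c) ⊗ₜ (1 : A)) + β • a ⊗ₜ ((1 : A) ⊗ₜ (b * c)) - α • a ⊗ₜ (b ⊗ₜ c) := by
  simp only [R23_tmul, hR, tmul_sub, tmul_add, tmul_smul]

end MultiplicationBraiding

theorem braid_R_alpha_beta_alpha_general {k A : Type*} [Field k] [Ring A] [Algebra k A]
    (α β : k)
    (R : A ⊗[k] A →ₗ[k] A ⊗[k] A)
    (hR : ∀ a b : A, R (a ⊗ₜ b) = α • (a * b) ⊗ₜ (1 : A) + β • (1 : A) ⊗ₜ (a * b) - α • a ⊗ₜ b) :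
    R12 R ∘ₗ R23 R ∘ₗ R12 R = R23 R ∘ₗ R12 R ∘ₗ R23 R := by
  refine ext_threefold' fun a b c => ?_
  simp only [LinearMap.comp_apply, map_add, map_sub, map_smul, R12_tmul_of_apply_tmul hR,
    R23_tmul_of_apply_tmul hR, mul_one, one_mul, mul_assoc]
  module

theorem braid_R_alpha_beta_alpha {k A : Type*} [Field k] [Ring A] [Algebra k A]
    (α β : k) (hα : α ≠ 0) (hβ : β ≠ 0)
    (R : A ⊗[k] A →ₗ[k] A ⊗[k] A)
    (hR : ∀ a b : A, R (a ⊗ₜ b) = α • (a * b) ⊗ₜ (1 : A) + β • (1 : A) ⊗ₜ (a * b) - α • a ⊗ₜ b) :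
    R12 R ∘ₗ R23 R ∘ₗ R12 R = R23 R ∘ₗ R12 R ∘ₗ R23 R :=
  braid_R_alpha_beta_alpha_general α β R hR
end
end

section
/- Let A be a unital associative k-algebra and α, β ∈ k with α ≠ 0 and β ≠ 0. Then the linear map R(a⊗b) = α·ab⊗1 + β·1⊗ab − β·a⊗b satisfies the braid equation. -/
open TensorProduct

noncomputable section

section
variable {k A : Type*} [Field k] [Ring A] [Algebra k A]
  (α β : k) (R : A ⊗[k] A →ₗ[k] A ⊗[k] A)
  (hR : ∀ a b : A, R (a ⊗ₜ b) = α • (a * b) ⊗ₜ (1 : A) + β • (1 : A) ⊗ₜ (a * b) - β • a ⊗ₜ b)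

include hR in
lemma R12_apply' (a b c : A) :
    R12 R (a ⊗ₜ (b ⊗ₜ c)) = α • (a * b) ⊗ₜ ((1:A) ⊗ₜ c) + β • (1:A) ⊗ₜ ((a * b) ⊗ₜ c)
      - β • a ⊗ₜ (b ⊗ₜ c) := by
  simp only [R12, LinearMap.comp_apply, LinearEquiv.coe_coe,
    TensorProduct.assoc_symm_tmul, TensorProduct.map_tmul, hR, LinearMap.id_apply,
    sub_tmul, add_tmul, smul_tmul', LinearEquiv.map_smul, map_sub, map_add,
    TensorProduct.assoc_tmul]

include hR in
lemma R23_apply' (a b c : A) :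
    R23 R (a ⊗ₜ (b ⊗ₜ c)) = α • a ⊗ₜ ((b * c) ⊗ₜ (1:A)) + β • a ⊗ₜ ((1:A) ⊗ₜ (b * c))
      - β • a ⊗ₜ (b ⊗ₜ c) := by
  simp [R23, hR, tmul_sub, tmul_add, tmul_smul]
end

theorem braid_R_alpha_beta_beta {k A : Type*} [Field k] [Ring A] [Algebra k A]
    (α β : k) (hα : α ≠ 0) (hβ : β ≠ 0)
    (R : A ⊗[k] A →ₗ[k] A ⊗[k] A)
    (hR : ∀ a b : A, R (a ⊗ₜ b) = α • (a * b) ⊗ₜ (1 : A) + β • (1 : A) ⊗ₜ (a * b) - β • a ⊗ₜ b) :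
    R12 R ∘ₗ R23 R ∘ₗ R12 R = R23 R ∘ₗ R12 R ∘ₗ R23 R := by
  ext a b c
  simp only [LinearMap.comp_apply, AlgebraTensorModule.curry_apply, curry_apply,
    LinearMap.coe_restrictScalars, map_add, map_sub, map_smul,
    R12_apply' α β R hR, R23_apply' α β R hR, one_mul, mul_one, smul_smul, smul_sub,
    smul_add, mul_assoc]
  module
end
end

section
/- Let A be a unital associative k-algebra and suppose the linear map R^A_{α,β,γ}(a⊗b) = α·ab⊗1 + β·1⊗ab − γ·a⊗b is a Yang-Baxter operator (invertible and satisfying the braid equation) for all unital associative algebras A. If A contains elements making the relevant tensors linearly independent (e.g. A = k[X]), then one of the following holds: (i) α = γ ≠ 0 and β ≠ 0; (ii) β = γ ≠ 0 and α ≠ 0; (iii) α = β = 0 and γ ≠ 0. -/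
open TensorProduct

noncomputable section

def F2 (k : Type*) [Field k] (i j : ℕ) :
    Polynomial k ⊗[k] Polynomial k →ₗ[k] k :=
  (TensorProduct.lid k k).toLinearMap ∘ₗ
    TensorProduct.map (Polynomial.lcoeff k i) (Polynomial.lcoeff k j)

lemma F2_tmul {k : Type*} [Field k] (i j : ℕ) (a b : Polynomial k) :
    F2 k i j (a ⊗ₜ b) = a.coeff i * b.coeff j := by
  simp [F2, Polynomial.lcoeff_apply, smul_eq_mul]

def F3 (k : Type*) [Field k] (i j l : ℕ) :
    Polynomial k ⊗[k] (Polynomial k ⊗[k] Polynomial k) →ₗ[k] k :=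
  (TensorProduct.lid k k).toLinearMap ∘ₗ
    TensorProduct.map (Polynomial.lcoeff k i) (F2 k j l)

lemma F3_tmul {k : Type*} [Field k] (i j l : ℕ) (a b c : Polynomial k) :
    F3 k i j l (a ⊗ₜ (b ⊗ₜ c)) = a.coeff i * (b.coeff j * c.coeff l) := by
  simp [F3, F2, Polynomial.lcoeff_apply, smul_eq_mul]

set_option maxHeartbeats 1600000 in
set_option synthInstance.maxHeartbeats 400000 in
theorem yb_operator_classification {k : Type*} [Field k] (α β γ : k)
    (R : Polynomial k ⊗[k] Polynomial k →ₗ[k] Polynomial k ⊗[k] Polynomial k)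
    (hR : ∀ a b : Polynomial k,
      R (a ⊗ₜ b) = α • (a * b) ⊗ₜ (1 : Polynomial k) + β • (1 : Polynomial k) ⊗ₜ (a * b) - γ • a ⊗ₜ b)
    (hbij : Function.Bijective R)
    (hbraid : R12 R ∘ₗ R23 R ∘ₗ R12 R = R23 R ∘ₗ R12 R ∘ₗ R23 R) :
    (α = γ ∧ γ ≠ 0 ∧ β ≠ 0) ∨ (β = γ ∧ γ ≠ 0 ∧ α ≠ 0) ∨ (α = 0 ∧ β = 0 ∧ γ ≠ 0) := by
  classical
  have hXX : (Polynomial.X * Polynomial.X : Polynomial k) = Polynomial.X ^ 2 :=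
    (sq Polynomial.X).symm
  -- γ ≠ 0 from surjectivity
  have hγ : γ ≠ 0 := by
    intro h0
    obtain ⟨v, hv⟩ := hbij.2 ((Polynomial.X : Polynomial k) ⊗ₜ Polynomial.X)
    have hz : ∀ w, F2 k 1 1 (R w) = 0 := by
      intro w
      induction w using TensorProduct.induction_on with
      | zero => simp
      | tmul a b =>
          simp [hR, h0, F2_tmul, Polynomial.coeff_one]
      | add x y hx hy => simp [map_add, hx, hy]
    have := hz v
    rw [hv] at this
    simp [F2_tmul] at this
  have hXone : (Polynomial.X : Polynomial k) ⊗ₜ[k] (1 : Polynomial k) ≠ 0 := by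
    intro h
    have := congrArg (F2 k 1 0) h
    simp [F2_tmul] at this
  have honeX : (1 : Polynomial k) ⊗ₜ[k] (Polynomial.X : Polynomial k) ≠ 0 := by
    intro h
    have := congrArg (F2 k 0 1) h
    simp [F2_tmul] at this
  have case1 : α = γ → β ≠ 0 := by
    intro hα hβ
    have h0 : R ((Polynomial.X : Polynomial k) ⊗ₜ (1 : Polynomial k)) = 0 := by
      rw [hR, hα, hβ]
      simp
    have := hbij.1 (a₁ := (Polynomial.X : Polynomial k) ⊗ₜ (1 : Polynomial k)) (a₂ := 0)
      (by rw [h0, map_zero])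
    exact hXone this
  have case2 : β = γ → α ≠ 0 := by
    intro hβ hα
    have h0 : R ((1 : Polynomial k) ⊗ₜ (Polynomial.X : Polynomial k)) = 0 := by
      rw [hR, hβ, hα]
      simp
    have := hbij.1 (a₁ := (1 : Polynomial k) ⊗ₜ (Polynomial.X : Polynomial k)) (a₂ := 0)
      (by rw [h0, map_zero])
    exact honeX this
  -- closed forms
  have hR12 : ∀ a b c : Polynomial k, R12 R (a ⊗ₜ (b ⊗ₜ c)) =
      α • (a * b) ⊗ₜ ((1 : Polynomial k) ⊗ₜ c) + β • (1 : Polynomial k) ⊗ₜ ((a * b) ⊗ₜ c)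
        - γ • a ⊗ₜ (b ⊗ₜ c) := by
    intro a b c
    simp [R12, hR, add_tmul, sub_tmul, smul_tmul']
  have hR23 : ∀ a b c : Polynomial k, R23 R (a ⊗ₜ (b ⊗ₜ c)) =
      α • a ⊗ₜ ((b * c) ⊗ₜ (1 : Polynomial k)) + β • a ⊗ₜ ((1 : Polynomial k) ⊗ₜ (b * c))
        - γ • a ⊗ₜ (b ⊗ₜ c) := by
    intro a b c
    simp [R23, hR, tmul_add, tmul_sub, tmul_smul]
  -- braid equations
  have key1 := congrArg (fun f => F3 k 2 0 0
    (f ((Polynomial.X : Polynomial k) ⊗ₜ ((Polynomial.X : Polynomial k) ⊗ₜ (1 : Polynomial k))))) hbraid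
  have key2 := congrArg (fun f => F3 k 0 2 0
    (f ((Polynomial.X : Polynomial k) ⊗ₜ ((Polynomial.X : Polynomial k) ⊗ₜ (1 : Polynomial k))))) hbraid
  simp only [LinearMap.coe_comp, Function.comp_apply, map_add, map_sub, map_smul,
    hR12, hR23, mul_one, one_mul,
    F3_tmul, hXX, Polynomial.coeff_one, Polynomial.coeff_X, Polynomial.coeff_X_pow,
    smul_eq_mul] at key1 key2
  norm_num at key1 key2
  have e1 : α * ((α - γ) * (β - γ)) = 0 := by linear_combination key1
  have e2 : β * ((α - γ) * (β - γ)) = 0 := by linear_combination key2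
  by_cases hαγ : α = γ
  · exact Or.inl ⟨hαγ, hγ, case1 hαγ⟩
  · by_cases hβγ : β = γ
    · exact Or.inr (Or.inl ⟨hβγ, hγ, case2 hβγ⟩)
    · have hprod : (α - γ) * (β - γ) ≠ 0 :=
        mul_ne_zero (sub_ne_zero.mpr hαγ) (sub_ne_zero.mpr hβγ)
      refine Or.inr (Or.inr ⟨?_, ?_, hγ⟩)
      · rcases mul_eq_zero.1 e1 with h | h
        · exact h
        · exact absurd h hprod
      · rcases mul_eq_zero.1 e2 with h | h
        · exact h
        · exact absurd h hprod

end
end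

section
/- Let A be a unital associative k-algebra and α ∈ k nonzero. The Yang-Baxter operator R^A_{α,α,α}(a⊗b) = α(ab⊗1 + 1⊗ab − a⊗b) is invertible, with inverse R^A_{α⁻¹,α⁻¹,α⁻¹}. -/
open TensorProduct

noncomputable section

theorem inverse_of_R_alpha_alpha_alpha {k A : Type*} [Field k] [Ring A] [Algebra k A]
    (α : k) (hα : α ≠ 0)
    (R R' : A ⊗[k] A →ₗ[k] A ⊗[k] A)
    (hR : ∀ a b : A, R (a ⊗ₜ b) = α • (a * b) ⊗ₜ (1 : A) + α • (1 : A) ⊗ₜ (a * b) - α • a ⊗ₜ b)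
    (hR' : ∀ a b : A, R' (a ⊗ₜ b) =
      α⁻¹ • (a * b) ⊗ₜ (1 : A) + α⁻¹ • (1 : A) ⊗ₜ (a * b) - α⁻¹ • a ⊗ₜ b) :
    R ∘ₗ R' = LinearMap.id ∧ R' ∘ₗ R = LinearMap.id := by
  constructor <;>
  · apply TensorProduct.ext'
    intro a b
    simp only [LinearMap.comp_apply, LinearMap.id_apply, hR, hR', map_add, map_sub, map_smul,
      mul_one, one_mul, smul_sub, smul_add, smul_smul, inv_mul_cancel₀ hα, mul_inv_cancel₀ hα,
      one_smul]
    abel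
end
end

section
/- Let q ∈ k be nonzero and η ∈ {0,1}. The 4×4 matrix R (acting on k²⊗k² with basis e₁⊗e₁, e₁⊗e₂, e₂⊗e₁, e₂⊗e₂) with rows (1,0,0,0), (0,1,0,0), (0,1−q,q,0), (η,0,0,−q) is an invertible solution of the quantum Yang-Baxter equation R¹² ∘ R¹³ ∘ R²³ = R²³ ∘ R¹³ ∘ R¹². -/
/-!
The matrix of `R` is lower triangular with diagonal `1, 1, q, -q`, so for `q ≠ 0` back
substitution shows that every basis vector lies in the range of `R`; in finite dimension this
makes `R` bijective. The Yang–Baxter equation is an identity between two endomorphisms of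
`V ⊗ (V ⊗ V)`, checked on the eight basis vectors `b i ⊗ (b j ⊗ b l)`.
-/

open TensorProduct

noncomputable section

open Module

section

variable {k V : Type*} [Field k] [AddCommGroup V] [Module k V]

@[simp]
lemma tw_tmul (x y : V) : tw k V (x ⊗ₜ y) = y ⊗ₜ x := rfl

@[simp]
lemma R12_tmul_tmul (R : V ⊗[k] V →ₗ[k] V ⊗[k] V) (x y z : V) :
    R12 R (x ⊗ₜ (y ⊗ₜ z)) = TensorProduct.assoc k V V V (R (x ⊗ₜ y) ⊗ₜ z) := rfl

@[simp]
lemma R23_tmul_s7 (R : V ⊗[k] V →ₗ[k] V ⊗[k] V) (x : V) (t : V ⊗[k] V) :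
    R23 R (x ⊗ₜ t) = x ⊗ₜ R t := rfl

@[simp]
lemma R13_tmul_tmul (R : V ⊗[k] V →ₗ[k] V ⊗[k] V) (x y z : V) :
    R13 R (x ⊗ₜ (y ⊗ₜ z)) = map LinearMap.id (tw k V) (R12 R (x ⊗ₜ (z ⊗ₜ y))) := rfl

/-- In the basis `b 0 ⊗ b 0, b 0 ⊗ b 1, b 1 ⊗ b 0, b 1 ⊗ b 1`, the matrix of `R` has rows
`(1, 0, 0, 0)`, `(0, 1, 0, 0)`, `(0, 1 - q, q, 0)`, `(η, 0, 0, -q)`. -/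
structure IsRMatrix (b : Basis (Fin 2) k V) (q η : k) (R : V ⊗[k] V →ₗ[k] V ⊗[k] V) : Prop where
  apply_00 : R (b 0 ⊗ₜ b 0) = b 0 ⊗ₜ b 0 + η • b 1 ⊗ₜ b 1
  apply_01 : R (b 0 ⊗ₜ b 1) = b 0 ⊗ₜ b 1 + (1 - q) • b 1 ⊗ₜ b 0
  apply_10 : R (b 1 ⊗ₜ b 0) = q • b 1 ⊗ₜ b 0
  apply_11 : R (b 1 ⊗ₜ b 1) = -q • b 1 ⊗ₜ b 1

lemma LinearMap.bijective_of_basis_mem_range {ι M : Type*} [AddCommGroup M] [Module k M]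
    [FiniteDimensional k M] (b : Basis ι k M) {f : M →ₗ[k] M}
    (h : ∀ i, b i ∈ LinearMap.range f) : Function.Bijective f := by
  have hsurj : Function.Surjective f := by
    rw [← LinearMap.range_eq_top, eq_top_iff, ← b.span_eq, Submodule.span_le]
    exact Set.range_subset_iff.2 h
  exact ⟨LinearMap.injective_iff_surjective.2 hsurj, hsurj⟩

namespace IsRMatrix

variable {b : Basis (Fin 2) k V} {q η : k} {R : V ⊗[k] V →ₗ[k] V ⊗[k] V}

theorem bijective (hR : IsRMatrix b q η R) (hq : q ≠ 0) : Function.Bijective R := by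
  have : FiniteDimensional k V := b.finiteDimensional_of_finite
  have mem_10 : b 1 ⊗ₜ b 0 ∈ LinearMap.range R :=
    ⟨q⁻¹ • b 1 ⊗ₜ b 0, by rw [map_smul, hR.apply_10, smul_smul, inv_mul_cancel₀ hq, one_smul]⟩
  have mem_11 : b 1 ⊗ₜ b 1 ∈ LinearMap.range R :=
    ⟨(-q)⁻¹ • b 1 ⊗ₜ b 1, by
      rw [map_smul, hR.apply_11, smul_smul, inv_mul_cancel₀ (neg_ne_zero.2 hq), one_smul]⟩
  have mem_01 : b 0 ⊗ₜ b 1 ∈ LinearMap.range R := by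
    simpa [hR.apply_01] using
      sub_mem (LinearMap.mem_range_self R (b 0 ⊗ₜ b 1)) (Submodule.smul_mem _ (1 - q) mem_10)
  have mem_00 : b 0 ⊗ₜ b 0 ∈ LinearMap.range R := by
    simpa [hR.apply_00] using
      sub_mem (LinearMap.mem_range_self R (b 0 ⊗ₜ b 0)) (Submodule.smul_mem _ η mem_11)
  refine LinearMap.bijective_of_basis_mem_range (b.tensorProduct b) fun ⟨i, j⟩ => ?_
  fin_cases i <;> fin_cases j <;> simpa

theorem yangBaxter (hR : IsRMatrix b q η R) :
    R12 R ∘ₗ R13 R ∘ₗ R23 R = R23 R ∘ₗ R13 R ∘ₗ R12 R := by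
  refine (b.tensorProduct (b.tensorProduct b)).ext fun ⟨i, j, l⟩ => ?_
  fin_cases i <;> fin_cases j <;> fin_cases l <;>
    simp only [Basis.tensorProduct_apply, Fin.zero_eta, Fin.mk_one, Fin.isValue,
      LinearMap.comp_apply, R12_tmul_tmul, R13_tmul_tmul, R23_tmul_s7, hR.apply_00, hR.apply_01,
      hR.apply_10, hR.apply_11, map_add, map_smul, tmul_add, add_tmul, tmul_smul, ← smul_tmul',
      TensorProduct.assoc_tmul, map_tmul, LinearMap.id_apply, tw_tmul, smul_add, smul_smul] <;>
    match_scalars <;> ring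

end IsRMatrix

end

theorem qybe_matrix_solution_general {k : Type*} [Field k] (q η : k) (hq : q ≠ 0)
    (R : (Fin 2 → k) ⊗[k] (Fin 2 → k) →ₗ[k] (Fin 2 → k) ⊗[k] (Fin 2 → k))
    (h11 : R (Pi.basisFun k (Fin 2) 0 ⊗ₜ Pi.basisFun k (Fin 2) 0) =
      Pi.basisFun k (Fin 2) 0 ⊗ₜ Pi.basisFun k (Fin 2) 0 +
        η • Pi.basisFun k (Fin 2) 1 ⊗ₜ Pi.basisFun k (Fin 2) 1)
    (h12 : R (Pi.basisFun k (Fin 2) 0 ⊗ₜ Pi.basisFun k (Fin 2) 1) =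
      Pi.basisFun k (Fin 2) 0 ⊗ₜ Pi.basisFun k (Fin 2) 1 +
        (1 - q) • Pi.basisFun k (Fin 2) 1 ⊗ₜ Pi.basisFun k (Fin 2) 0)
    (h21 : R (Pi.basisFun k (Fin 2) 1 ⊗ₜ Pi.basisFun k (Fin 2) 0) =
      q • Pi.basisFun k (Fin 2) 1 ⊗ₜ Pi.basisFun k (Fin 2) 0)
    (h22 : R (Pi.basisFun k (Fin 2) 1 ⊗ₜ Pi.basisFun k (Fin 2) 1) =
      -q • Pi.basisFun k (Fin 2) 1 ⊗ₜ Pi.basisFun k (Fin 2) 1) :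
    Function.Bijective R ∧
      R12 R ∘ₗ R13 R ∘ₗ R23 R = R23 R ∘ₗ R13 R ∘ₗ R12 R := by
  have hR : IsRMatrix (Pi.basisFun k (Fin 2)) q η R := ⟨h11, h12, h21, h22⟩
  exact ⟨hR.bijective hq, hR.yangBaxter⟩

theorem qybe_matrix_solution {k : Type*} [Field k] (q η : k) (hq : q ≠ 0)
    (hη : η = 0 ∨ η = 1)
    (R : (Fin 2 → k) ⊗[k] (Fin 2 → k) →ₗ[k] (Fin 2 → k) ⊗[k] (Fin 2 → k))
    (h11 : R (Pi.basisFun k (Fin 2) 0 ⊗ₜ Pi.basisFun k (Fin 2) 0) =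
      Pi.basisFun k (Fin 2) 0 ⊗ₜ Pi.basisFun k (Fin 2) 0 +
        η • Pi.basisFun k (Fin 2) 1 ⊗ₜ Pi.basisFun k (Fin 2) 1)
    (h12 : R (Pi.basisFun k (Fin 2) 0 ⊗ₜ Pi.basisFun k (Fin 2) 1) =
      Pi.basisFun k (Fin 2) 0 ⊗ₜ Pi.basisFun k (Fin 2) 1 +
        (1 - q) • Pi.basisFun k (Fin 2) 1 ⊗ₜ Pi.basisFun k (Fin 2) 0)
    (h21 : R (Pi.basisFun k (Fin 2) 1 ⊗ₜ Pi.basisFun k (Fin 2) 0) =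
      q • Pi.basisFun k (Fin 2) 1 ⊗ₜ Pi.basisFun k (Fin 2) 0)
    (h22 : R (Pi.basisFun k (Fin 2) 1 ⊗ₜ Pi.basisFun k (Fin 2) 1) =
      -q • Pi.basisFun k (Fin 2) 1 ⊗ₜ Pi.basisFun k (Fin 2) 1) :
    Function.Bijective R ∧
      R12 R ∘ₗ R13 R ∘ₗ R23 R = R23 R ∘ₗ R13 R ∘ₗ R12 R :=
  qybe_matrix_solution_general q η hq R h11 h12 h21 h22
end
end

section
/- Let L be a Lie algebra over k, z a central element of L, and α ∈ k. Then the linear map φ(x⊗y) = α[x,y]⊗z + y⊗x on L⊗L satisfies the braid equation φ¹² ∘ φ²³ ∘ φ¹² = φ²³ ∘ φ¹² ∘ φ²³. -/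
open TensorProduct

noncomputable section

theorem lie_braid {k L : Type*} [Field k] [LieRing L] [LieAlgebra k L]
    (z : L) (hz : ∀ x : L, ⁅z, x⁆ = 0) (α : k)
    (φ : L ⊗[k] L →ₗ[k] L ⊗[k] L)
    (hφ : ∀ x y : L, φ (x ⊗ₜ y) = α • ⁅x, y⁆ ⊗ₜ z + y ⊗ₜ x) :
    R12 φ ∘ₗ R23 φ ∘ₗ R12 φ = R23 φ ∘ₗ R12 φ ∘ₗ R23 φ := by
  have hz' : ∀ x : L, ⁅x, z⁆ = 0 := fun x => by rw [← lie_skew, hz, neg_zero]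
  ext x y w
  simp only [R12, R23, LinearMap.comp_apply, LinearEquiv.coe_coe,
    TensorProduct.AlgebraTensorModule.curry_apply, TensorProduct.curry_apply,
    LinearMap.coe_restrictScalars, TensorProduct.assoc_symm_tmul, TensorProduct.map_tmul,
    LinearMap.id_coe, id_eq, TensorProduct.assoc_tmul, hφ, hz, hz',
    TensorProduct.add_tmul, TensorProduct.tmul_add, TensorProduct.smul_tmul',
    TensorProduct.tmul_smul, map_add, map_smul, LinearMap.add_apply, smul_add,
    TensorProduct.zero_tmul, TensorProduct.tmul_zero, smul_zero, zero_add, add_zero,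
    lie_smul, smul_lie]
  rw [leibniz_lie x y w]
  simp only [TensorProduct.add_tmul, smul_add, smul_smul, TensorProduct.smul_tmul, TensorProduct.smul_tmul']
  abel
end
end

section
/- Let V be a 2-dimensional k-vector space with basis {a, b} and θ : V⊗V → V a commutative bilinear multiplication satisfying a·a = b and b·b = a. Then (V, θ) is a Jordan algebra (i.e. satisfies (x²y)x = x²(yx) for all x, y) if and only if (V, θ) is a non-unital commutative associative algebra. -/
theorem jordan_iff_assoc {k V : Type*} [Field k] [AddCommGroup V] [Module k V]
    (h2 : (2 : k) ≠ 0)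
    (a b : V) (hind : LinearIndependent k ![a, b])
    (hspan : Submodule.span k ({a, b} : Set V) = ⊤)
    (θ : V →ₗ[k] V →ₗ[k] V)
    (hcomm : ∀ x y : V, θ x y = θ y x)
    (haa : θ a a = b) (hbb : θ b b = a) :
    (∀ x y : V, θ (θ (θ x x) y) x = θ (θ x x) (θ y x)) ↔
      (∀ x y z : V, θ (θ x y) z = θ x (θ y z)) := by
  constructor
  · intro hJ
    have E1 : θ (θ a b) a = a := by
      have h := hJ a a
      rw [haa, hbb, hcomm b a] at h
      exact h
    have E2 : θ (θ a b) b = b := by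
      have h := hJ b b
      rw [hbb, haa] at h
      exact h
    have mem : ∀ v : V, v ∈ Submodule.span k ({a, b} : Set V) := by
      rw [hspan]; intro v; trivial
    have c1 : θ (θ a a) a = θ a (θ a a) := by rw [haa]; exact hcomm b a
    have c2 : θ (θ a a) b = θ a (θ a b) := by
      rw [haa, hbb, hcomm a (θ a b)]; exact E1.symm
    have c3 : θ (θ a b) a = θ a (θ b a) := by rw [hcomm b a, hcomm a (θ a b)]
    have c4 : θ (θ a b) b = θ a (θ b b) := by rw [hbb, haa]; exact E2
    have c5 : θ (θ b a) a = θ b (θ a a) := by rw [hcomm b a, E1, haa, hbb]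
    have c6 : θ (θ b a) b = θ b (θ a b) := by rw [hcomm b a, hcomm b (θ a b)]
    have c7 : θ (θ b b) a = θ b (θ b a) := by
      rw [hbb, haa, hcomm b a, hcomm b (θ a b), E2]
    have c8 : θ (θ b b) b = θ b (θ b b) := by rw [hbb]; exact hcomm a b
    have base : ∀ x ∈ ({a, b} : Set V), ∀ y ∈ ({a, b} : Set V),
        ∀ z ∈ ({a, b} : Set V), θ (θ x y) z = θ x (θ y z) := by
      rintro x (rfl | rfl) y (rfl | rfl) z (rfl | rfl) <;> assumption
    intro x y z
    -- induction on z
    have stepz : ∀ x ∈ ({a, b} : Set V), ∀ y ∈ ({a, b} : Set V),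
        ∀ z : V, θ (θ x y) z = θ x (θ y z) := by
      intro x hx y hy z
      induction (mem z) using Submodule.span_induction with
      | mem w hw => exact base x hx y hy w hw
      | zero => simp
      | add w₁ w₂ _ _ ih1 ih2 => simp [map_add, ih1, ih2]
      | smul c w _ ih => simp [map_smul, ih]
    have stepy : ∀ x ∈ ({a, b} : Set V), ∀ y z : V,
        θ (θ x y) z = θ x (θ y z) := by
      intro x hx y z
      induction (mem y) using Submodule.span_induction with
      | mem w hw => exact stepz x hx w hw z
      | zero => simp
      | add w₁ w₂ _ _ ih1 ih2 => simp [map_add, LinearMap.add_apply, ih1, ih2]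
      | smul c w _ ih => simp [map_smul, LinearMap.smul_apply, ih]
    induction (mem x) using Submodule.span_induction with
    | mem w hw => exact stepy w hw y z
    | zero => simp
    | add w₁ w₂ _ _ ih1 ih2 => simp [map_add, LinearMap.add_apply, ih1, ih2]
    | smul c w _ ih => simp [map_smul, LinearMap.smul_apply, ih]
  · intro hA x y
    rw [hA]
end

section
/- Let V be the 2-dimensional commutative algebra over a field k of characteristic ≠ 2, 3 with basis {a,b}, a² = b, b² = a, and ab = ba = λa + μb for some λ, μ ∈ k. If V satisfies the Jordan identity (x²y)x = x²(yx) for all x, y ∈ V, then V is associative. -/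
theorem jordan_implies_assoc {k V : Type*} [Field k] [AddCommGroup V] [Module k V]
    (h2 : (2 : k) ≠ 0) (h3 : (3 : k) ≠ 0)
    (a b : V) (hind : LinearIndependent k ![a, b])
    (hspan : Submodule.span k ({a, b} : Set V) = ⊤)
    (θ : V →ₗ[k] V →ₗ[k] V)
    (hcomm : ∀ x y : V, θ x y = θ y x)
    (lam mu : k)
    (haa : θ a a = b) (hbb : θ b b = a) (hab : θ a b = lam • a + mu • b)
    (hjordan : ∀ x y : V, θ (θ (θ x x) y) x = θ (θ x x) (θ y x)) :
    ∀ x y z : V, θ (θ x y) z = θ x (θ y z) := by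
  have hpair := LinearIndependent.pair_iff.mp hind
  have hba : θ b a = lam • a + mu • b := (hcomm b a).trans hab
  -- extract scalar equations from two instances of the Jordan identity
  have j1 := hjordan a b
  rw [haa, hbb, haa, hba, map_add, map_smul, map_smul, hba, hbb] at j1
  have e1 : lam * lam + mu = 0 ∧ lam * mu - 1 = 0 := by
    apply hpair
    have h : ((lam * lam + mu) • a + (lam * mu - 1) • b)
        = lam • (lam • a + mu • b) + mu • a - b := by
      simp only [smul_add, smul_smul, sub_smul, add_smul, one_smul]
      abel
    rw [h, ← j1, sub_self]
  have j2 := hjordan b a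
  rw [hbb, haa, hbb, hab, map_add, map_smul, map_smul, haa, hab] at j2
  have e2 : mu * lam - 1 = 0 ∧ lam + mu * mu = 0 := by
    apply hpair
    have h : ((mu * lam - 1) • a + (lam + mu * mu) • b)
        = lam • b + mu • (lam • a + mu • b) - a := by
      simp only [smul_add, smul_smul, sub_smul, add_smul, one_smul]
      abel
    rw [h, ← j2, sub_self]
  obtain ⟨q1, q2⟩ := e1
  obtain ⟨q3, q4⟩ := e2
  -- associativity on basis triples
  have Paaa : θ (θ a a) a = θ a (θ a a) := by rw [haa]; exact hcomm b a
  have Paab : θ (θ a a) b = θ a (θ a b) := by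
    rw [haa, hbb, hab, map_add, map_smul, map_smul, haa, hab]
    match_scalars
    · linear_combination -q3
    · linear_combination -q4
  have Paba : θ (θ a b) a = θ a (θ b a) := by rw [hcomm (θ a b) a, hcomm b a]
  have Pabb : θ (θ a b) b = θ a (θ b b) := by
    rw [hab, hbb, haa, map_add, LinearMap.add_apply, map_smul, map_smul,
      LinearMap.smul_apply, LinearMap.smul_apply, hab, hbb]
    match_scalars
    · linear_combination q1
    · linear_combination q2
  have Pbaa : θ (θ b a) a = θ b (θ a a) := by
    rw [hba, haa, hbb, map_add, LinearMap.add_apply, map_smul, map_smul,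
      LinearMap.smul_apply, LinearMap.smul_apply, haa, hba]
    match_scalars
    · linear_combination q4
    · linear_combination q3
  have Pbab : θ (θ b a) b = θ b (θ a b) := by rw [hcomm (θ b a) b, hcomm a b]
  have Pbba : θ (θ b b) a = θ b (θ b a) := by
    rw [hbb, haa, hba, map_add, map_smul, map_smul, hba, hbb]
    match_scalars
    · linear_combination -q2
    · linear_combination -q1
  have Pbbb : θ (θ b b) b = θ b (θ b b) := by rw [hbb]; exact hcomm a b
  intro x y z
  have hx : x ∈ Submodule.span k ({a, b} : Set V) := hspan ▸ Submodule.mem_top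
  have hy : y ∈ Submodule.span k ({a, b} : Set V) := hspan ▸ Submodule.mem_top
  have hz : z ∈ Submodule.span k ({a, b} : Set V) := hspan ▸ Submodule.mem_top
  obtain ⟨x1, x2, rfl⟩ := Submodule.mem_span_pair.mp hx
  obtain ⟨y1, y2, rfl⟩ := Submodule.mem_span_pair.mp hy
  obtain ⟨z1, z2, rfl⟩ := Submodule.mem_span_pair.mp hz
  simp only [map_add, map_smul, LinearMap.add_apply, LinearMap.smul_apply, smul_add,
    Paaa, Paab, Paba, Pabb, Pbaa, Pbab, Pbba, Pbbb]
end
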